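/- arXiv:2211.16254 — 9 statements merged into one kernel-verified Lean document; each statement's English description precedes it below -/
import Mathlib

section
/- Let m ≥ 1, let D ⊆ ℝ^m be a convex set, let U : ℝ^m → ℝ be strictly convex on D, and let L : ℝ^m → ℝ be a linear map with L(y) > 0 for every y ∈ D. Define s(y) = −U(y)/L(y) on D. Then for all y₁, y₂ ∈ D with y₁ ≠ y₂ and all β ∈ (0,1), one has s(β y₁ + (1−β) y₂) > min{ s(y₁), s(y₂) }. -/
/-!
With `c := min (s y₁) (s y₂)` and `L > 0`, the bound `c ≤ s y` says `U y + c L y ≤ 0`. Since `L` is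
linear, `U + c L` is still strictly convex, so it is strictly negative strictly between `y₁` and
`y₂`, which is `c < s` there.
-/

theorem StrictConvexOn.min_neg_div_lt_neg_div {E : Type*} [AddCommGroup E] [Module ℝ E]
    {D : Set E} {U : E → ℝ} (hU : StrictConvexOn ℝ D U) (L : E →ₗ[ℝ] ℝ)
    (hL : ∀ y ∈ D, 0 < L y) {x y : E} (hx : x ∈ D) (hy : y ∈ D) (hne : x ≠ y)
    {a b : ℝ} (ha : 0 < a) (hb : 0 < b) (hab : a + b = 1) :
    min (-U x / L x) (-U y / L y) < -U (a • x + b • y) / L (a • x + b • y) := by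
  set c := min (-U x / L x) (-U y / L y)
  have hg : StrictConvexOn ℝ D fun z => U z + c * L z :=
    hU.add_convexOn ((c • L).convexOn hU.1)
  have hgx : U x + c * L x ≤ 0 := by
    have : c * L x ≤ -U x := (le_div_iff₀ (hL x hx)).1 (min_le_left _ _)
    linarith
  have hgy : U y + c * L y ≤ 0 := by
    have : c * L y ≤ -U y := (le_div_iff₀ (hL y hy)).1 (min_le_right _ _)
    linarith
  have hgz : U (a • x + b • y) + c * L (a • x + b • y) < 0 :=
    calc _ < a • (U x + c * L x) + b • (U y + c * L y) := hg.2 hx hy hne ha hb hab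
      _ ≤ 0 := by simp only [smul_eq_mul]; nlinarith
  rw [lt_div_iff₀ (hL _ (hU.1 hx hy ha.le hb.le hab))]
  linarith

theorem quasiConcavity_specific_entropy_general
    (m : ℕ)
    (D : Set (Fin m → ℝ))
    (U : (Fin m → ℝ) → ℝ) (hU : StrictConvexOn ℝ D U)
    (L : (Fin m → ℝ) →ₗ[ℝ] ℝ) (hL : ∀ y ∈ D, 0 < L y)
    (s : (Fin m → ℝ) → ℝ) (hs : ∀ y ∈ D, s y = -U y / L y)
    (y₁ y₂ : Fin m → ℝ) (hy₁ : y₁ ∈ D) (hy₂ : y₂ ∈ D) (hne : y₁ ≠ y₂)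
    (β : ℝ) (hβ : β ∈ Set.Ioo (0 : ℝ) 1) :
    min (s y₁) (s y₂) < s (β • y₁ + (1 - β) • y₂) := by
  obtain ⟨hβ₀, hβ₁⟩ := hβ
  have hmem : β • y₁ + (1 - β) • y₂ ∈ D :=
    hU.1 hy₁ hy₂ hβ₀.le (sub_nonneg.2 hβ₁.le) (add_sub_cancel _ _)
  rw [hs y₁ hy₁, hs y₂ hy₂, hs _ hmem]
  exact hU.min_neg_div_lt_neg_div L hL hy₁ hy₂ hne hβ₀ (sub_pos.2 hβ₁) (add_sub_cancel _ _)

/-- Quasi-concavity of the specific thermodynamic entropy `s = -U/L`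
(abstract form of Lemma A.1): `U` strictly convex on the convex set `D`,
`L` linear and positive on `D`. -/
theorem quasiConcavity_specific_entropy
    (m : ℕ) (hm : 1 ≤ m)
    (D : Set (Fin m → ℝ)) (hD : Convex ℝ D)
    (U : (Fin m → ℝ) → ℝ) (hU : StrictConvexOn ℝ D U)
    (L : (Fin m → ℝ) →ₗ[ℝ] ℝ) (hL : ∀ y ∈ D, 0 < L y)
    (s : (Fin m → ℝ) → ℝ) (hs : ∀ y ∈ D, s y = -U y / L y)
    (y₁ y₂ : Fin m → ℝ) (hy₁ : y₁ ∈ D) (hy₂ : y₂ ∈ D) (hne : y₁ ≠ y₂)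
    (β : ℝ) (hβ : β ∈ Set.Ioo (0 : ℝ) 1) :
    min (s y₁) (s y₂) < s (β • y₁ + (1 - β) • y₂) :=
  quasiConcavity_specific_entropy_general m D U hU L hL s hs y₁ y₂ hy₁ hy₂ hne β hβ
end

section
/- Let m ≥ 1, let D ⊆ ℝ^m be a convex set, let U : ℝ^m → ℝ be convex on D, and let L : ℝ^m → ℝ be a linear map with L(y) > 0 for y ∈ D. Define s(y) = −U(y)/L(y) on D. Let κ ⊂ ℝ^d be a compact set with positive finite Lebesgue measure |κ|, and let y : κ → D be continuous with average ȳ = (1/|κ|) ∫_κ y(x) dx, and assume ȳ ∈ D. Then s(ȳ) ≥ min_{x ∈ κ} s(y(x)). -/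
/-!
Let `c = s (y x₀)` be the minimum of `s ∘ y` on `κ`. Where `L > 0`, the inequality `c ≤ s z` is
equivalent to `U z + c L z ≤ 0`, a sublevel condition for the convex function `U + c L`. The
average `ȳ` lies in the convex hull of the image `y(κ)`: this hull is compact (Carathéodory), hence
closed, so it contains the average. A convex function on the convex hull of a set is bounded by its
values on that set, so `U + c L ≤ 0` at `ȳ` as well.
-/

open MeasureTheory

theorem convexHull_eq_iUnion_image_stdSimplex_pi {E : Type*} [AddCommGroup E] [Module ℝ E]
    [FiniteDimensional ℝ E] (s : Set E) :
    convexHull ℝ s = ⋃ k ∈ Finset.range (Module.finrank ℝ E + 2),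
      (fun wp : (Fin k → ℝ) × (Fin k → E) => ∑ i, wp.1 i • wp.2 i) ''
        (stdSimplex ℝ (Fin k) ×ˢ Set.univ.pi fun _ => s) := by
  apply subset_antisymm
  · intro x hx
    obtain ⟨ι, _, z, w, hzs, hz, hw0, hw1, rfl⟩ := eq_pos_convex_span_of_mem_convexHull hx
    have hcard : Fintype.card ι ≤ Module.finrank ℝ E + 1 :=
      hz.card_le_finrank_succ.trans (Nat.succ_le_succ (Submodule.finrank_le _))
    set e := Fintype.equivFin ι
    refine Set.mem_biUnion (Finset.mem_range.2 (Nat.lt_succ_of_le hcard)) ⟨(w ∘ e.symm, z ∘ e.symm),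
      ⟨⟨fun i => (hw0 _).le, ?_⟩, fun i _ => hzs ⟨_, rfl⟩⟩, ?_⟩
    · simpa [Function.comp_def] using (e.symm.sum_comp w).trans hw1
    · exact e.symm.sum_comp fun i => w i • z i
  · refine Set.iUnion₂_subset fun k _ => ?_
    rintro _ ⟨⟨w, p⟩, ⟨hw, hp⟩, rfl⟩
    exact (convex_convexHull ℝ s).sum_mem (fun i _ => hw.1 i) hw.2
      fun i _ => subset_convexHull ℝ s (hp i (Set.mem_univ i))

theorem IsCompact.convexHull {E : Type*} [AddCommGroup E] [Module ℝ E] [TopologicalSpace E]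
    [ContinuousAdd E] [ContinuousSMul ℝ E] [FiniteDimensional ℝ E] {s : Set E}
    (hs : IsCompact s) : IsCompact (convexHull ℝ s) := by
  rw [convexHull_eq_iUnion_image_stdSimplex_pi]
  refine (Finset.range _).isCompact_biUnion fun k _ => ?_
  exact ((isCompact_stdSimplex ℝ (Fin k)).prod (isCompact_univ_pi fun _ => hs)).image <|
    continuous_finsetSum _ fun i _ =>
      ((continuous_apply i).comp continuous_fst).smul ((continuous_apply i).comp continuous_snd)

theorem setAverage_mem_convexHull_image {α E : Type*} [MeasurableSpace α] [NormedAddCommGroup E]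
    [NormedSpace ℝ E] [FiniteDimensional ℝ E] {μ : Measure α} {κ : Set α} {g : α → E}
    (hκ : MeasurableSet κ) (h0 : μ κ ≠ 0) (hfin : μ κ ≠ ⊤) (hg : IntegrableOn g κ μ)
    (hgκ : IsCompact (g '' κ)) :
    ⨍ a in κ, g a ∂μ ∈ convexHull ℝ (g '' κ) :=
  (convex_convexHull ℝ _).set_average_mem hgκ.convexHull.isClosed h0 hfin
    ((ae_restrict_mem hκ).mono fun a ha => subset_convexHull ℝ _ ⟨a, ha, rfl⟩) hg

theorem specific_entropy_of_average_general
    (m d : ℕ)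
    (D : Set (Fin m → ℝ))
    (U : (Fin m → ℝ) → ℝ) (hU : ConvexOn ℝ D U)
    (L : (Fin m → ℝ) →ₗ[ℝ] ℝ) (hL : ∀ y ∈ D, 0 < L y)
    (s : (Fin m → ℝ) → ℝ) (hs : ∀ y ∈ D, s y = -U y / L y)
    (κ : Set (Fin d → ℝ)) (hκc : IsCompact κ)
    (hκpos : 0 < volume κ) (hκfin : volume κ < ⊤)
    (y : (Fin d → ℝ) → (Fin m → ℝ)) (hy : ContinuousOn y κ)
    (hyD : ∀ x ∈ κ, y x ∈ D)
    (ybar : Fin m → ℝ)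
    (hybar : ybar = (volume κ).toReal⁻¹ • ∫ x in κ, y x)
    (x₀ : Fin d → ℝ)
    (hmin : ∀ x ∈ κ, s (y x₀) ≤ s (y x)) :
    s (y x₀) ≤ s ybar := by
  set c := s (y x₀)
  have hybar_hull : ybar ∈ convexHull ℝ (y '' κ) := by
    simpa [hybar, setAverage_eq, measureReal_def] using
      setAverage_mem_convexHull_image hκc.measurableSet hκpos.ne' hκfin.ne
        (hy.integrableOn_compact hκc) (hκc.image_of_continuousOn hy)
  have hyκD : y '' κ ⊆ D := Set.image_subset_iff.2 hyD
  have hybarD : ybar ∈ D := convexHull_min hyκD hU.1 hybar_hull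
  have hsublevel : ∀ z ∈ D, c ≤ s z ↔ U z + c * L z ≤ 0 := fun z hz => by
    rw [hs z hz, le_div_iff₀ (hL z hz), le_neg, ← sub_nonpos, sub_neg_eq_add]
  have hV : ConvexOn ℝ D fun z => U z + c * L z := hU.add ((c • L).convexOn hU.1)
  obtain ⟨_, ⟨x, hx, rfl⟩, hle⟩ := hV.exists_ge_of_mem_convexHull hyκD hybar_hull
  exact (hsublevel ybar hybarD).2 (hle.trans ((hsublevel _ (hyD x hx)).1 (hmin x hx)))

/-- Lemma A.2 (specific entropy of the element average): with `U` convex on the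
convex set `D`, `L` linear and positive on `D`, and `s = -U/L`, the specific
entropy of the average of a continuous `D`-valued field over a compact set `κ`
of positive finite measure is at least the minimum of `s ∘ y` over `κ`
(here expressed via a minimizer `x₀`). -/
theorem specific_entropy_of_average
    (m d : ℕ) (hm : 1 ≤ m) (hd : 1 ≤ d)
    (D : Set (Fin m → ℝ)) (hD : Convex ℝ D)
    (U : (Fin m → ℝ) → ℝ) (hU : ConvexOn ℝ D U)
    (L : (Fin m → ℝ) →ₗ[ℝ] ℝ) (hL : ∀ y ∈ D, 0 < L y)
    (s : (Fin m → ℝ) → ℝ) (hs : ∀ y ∈ D, s y = -U y / L y)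
    (κ : Set (Fin d → ℝ)) (hκc : IsCompact κ)
    (hκpos : 0 < volume κ) (hκfin : volume κ < ⊤)
    (y : (Fin d → ℝ) → (Fin m → ℝ)) (hy : ContinuousOn y κ)
    (hyD : ∀ x ∈ κ, y x ∈ D)
    (ybar : Fin m → ℝ)
    (hybar : ybar = (volume κ).toReal⁻¹ • ∫ x in κ, y x)
    (hybarD : ybar ∈ D)
    (x₀ : Fin d → ℝ) (hx₀ : x₀ ∈ κ)
    (hmin : ∀ x ∈ κ, s (y x₀) ≤ s (y x)) :
    s (y x₀) ≤ s ybar :=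
  specific_entropy_of_average_general m d D U hU L hL s hs κ hκc hκpos hκfin y hy hyD ybar hybar x₀
    hmin
end

section
/- Let m ≥ 1, let D ⊆ ℝ^m be a convex set, let U : ℝ^m → ℝ be convex on D, and let L : ℝ^m → ℝ be a linear map with L(y) > 0 for y ∈ D. Define s(y) = −U(y)/L(y) on D. Let y₁, …, y_N ∈ D and let w₁, …, w_N ≥ 0 with Σ_{j=1}^N w_j = 1. Then s(Σ_{j=1}^N w_j y_j) ≥ min_{j=1,…,N} s(y_j). -/
/-! The superlevel set `{c ≤ -U/L}` of the specific entropy is the sublevel set `{U + c L ≤ 0}`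
of a convex function, hence convex, so `-U/L` is quasiconcave. A convex combination of points
lying in the superlevel set at the minimum value stays in it. -/

open Finset

section

variable {𝕜 E β ι : Type*} [Field 𝕜] [LinearOrder 𝕜] [IsStrictOrderedRing 𝕜]
  [AddCommGroup E] [Module 𝕜 E] {D : Set E}

theorem QuasiconcaveOn.inf'_le_map_sum [SemilatticeInf β] {f : E → β} (hf : QuasiconcaveOn 𝕜 D f)
    {t : Finset ι} (ht : t.Nonempty) {w : ι → 𝕜} {y : ι → E} (hw₀ : ∀ i ∈ t, 0 ≤ w i)
    (hw₁ : ∑ i ∈ t, w i = 1) (hy : ∀ i ∈ t, y i ∈ D) :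
    t.inf' ht (f ∘ y) ≤ f (∑ i ∈ t, w i • y i) :=
  ((hf _).sum_mem hw₀ hw₁ fun i hi => ⟨hy i hi, inf'_le _ hi⟩).2

theorem ConvexOn.quasiconcaveOn_neg_div {U : E → 𝕜} (hU : ConvexOn 𝕜 D U) (L : E →ₗ[𝕜] 𝕜)
    (hL : ∀ x ∈ D, 0 < L x) : QuasiconcaveOn 𝕜 D fun x => -U x / L x := by
  intro c
  have hsub : ConvexOn 𝕜 D fun x => U x + (c • L) x := hU.add ((c • L).convexOn hU.1)
  convert hsub.convex_le 0 using 1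
  ext x
  simp only [Set.mem_ofPred_eq, LinearMap.smul_apply, smul_eq_mul]
  refine and_congr_right fun hx => ?_
  rw [le_div_iff₀ (hL x hx)]
  constructor <;> intro h <;> linarith

end

theorem specific_entropy_of_convex_combination_general
    (m N : ℕ) (hN : 0 < N)
    (D : Set (Fin m → ℝ))
    (U : (Fin m → ℝ) → ℝ) (hU : ConvexOn ℝ D U)
    (L : (Fin m → ℝ) →ₗ[ℝ] ℝ) (hL : ∀ y ∈ D, 0 < L y)
    (s : (Fin m → ℝ) → ℝ) (hs : ∀ y ∈ D, s y = -U y / L y)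
    (y : Fin N → (Fin m → ℝ)) (hy : ∀ j, y j ∈ D)
    (w : Fin N → ℝ) (hw : ∀ j, 0 ≤ w j) (hwsum : ∑ j, w j = 1) :
    Finset.univ.inf' ⟨⟨0, hN⟩, Finset.mem_univ _⟩ (fun j => s (y j))
      ≤ s (∑ j, w j • y j) := by
  have hmem : ∑ j, w j • y j ∈ D := hU.1.sum_mem (fun j _ => hw j) hwsum fun j _ => hy j
  calc univ.inf' ⟨⟨0, hN⟩, mem_univ _⟩ (fun j => s (y j))
      = univ.inf' ⟨⟨0, hN⟩, mem_univ _⟩ ((fun x => -U x / L x) ∘ y) :=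
        inf'_congr _ rfl fun j _ => hs _ (hy j)
    _ ≤ -U (∑ j, w j • y j) / L (∑ j, w j • y j) :=
        (hU.quasiconcaveOn_neg_div L hL).inf'_le_map_sum _ (fun j _ => hw j) hwsum fun j _ => hy j
    _ = s (∑ j, w j • y j) := (hs _ hmem).symm

/-- Finite convex-combination version of the entropy-of-the-average lemma:
with `U` convex on the convex set `D`, `L` linear and positive on `D`, and
`s = -U/L`, the specific entropy of any convex combination of states in `D`
is at least the minimum of the specific entropies of those states. -/
theorem specific_entropy_of_convex_combination
    (m N : ℕ) (hm : 1 ≤ m) (hN : 0 < N)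
    (D : Set (Fin m → ℝ)) (hD : Convex ℝ D)
    (U : (Fin m → ℝ) → ℝ) (hU : ConvexOn ℝ D U)
    (L : (Fin m → ℝ) →ₗ[ℝ] ℝ) (hL : ∀ y ∈ D, 0 < L y)
    (s : (Fin m → ℝ) → ℝ) (hs : ∀ y ∈ D, s y = -U y / L y)
    (y : Fin N → (Fin m → ℝ)) (hy : ∀ j, y j ∈ D)
    (w : Fin N → ℝ) (hw : ∀ j, 0 ≤ w j) (hwsum : ∑ j, w j = 1) :
    Finset.univ.inf' ⟨⟨0, hN⟩, Finset.mem_univ _⟩ (fun j => s (y j))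
      ≤ s (∑ j, w j • y j) :=
  specific_entropy_of_convex_combination_general m N hN D U hU L hL s hs y hy w hw hwsum
end

section
/- Let n_s, n_r ≥ 1, let W_i > 0 for i = 1,…,n_s, let ν^f_{ij}, ν^r_{ij} be real numbers (forward and reverse stoichiometric coefficients), let K^s_j > 0 for j = 1,…,n_r, and let μ ∈ ℝ^{n_s}. Define the rates of progress q_j = K^s_j [ exp( Σ_{i=1}^{n_s} ν^f_{ij} W_i μ_i ) − exp( Σ_{i=1}^{n_s} ν^r_{ij} W_i μ_i ) ] and the production rates ω_i = Σ_{j=1}^{n_r} (ν^r_{ij} − ν^f_{ij}) q_j. Then Σ_{i=1}^{n_s} W_i μ_i ω_i ≤ 0. -/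
/-!
With `y i = W i * μ i`, the exponents of reaction `j` are `a j = (y ᵥ* νf) j` and
`b j = (y ᵥ* νr) j`. Transposing the stoichiometric matrix `νr - νf` turns `Σ i, y i * ω i` into
`Σ j, K j * (exp (a j) - exp (b j)) * (b j - a j)`, and each summand is nonpositive because `exp`
is monotone.
-/

open Matrix

theorem dotProduct_sub_mulVec_rates_nonpos {ι κ : Type*} [Fintype ι] [Fintype κ]
    {f : ℝ → ℝ} (hf : Monotone f) (A B : Matrix ι κ ℝ) (K : κ → ℝ) (hK : ∀ j, 0 ≤ K j)
    (y : ι → ℝ) :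
    y ⬝ᵥ (B - A) *ᵥ (fun j => K j * (f ((y ᵥ* A) j) - f ((y ᵥ* B) j))) ≤ 0 := by
  rw [dotProduct_mulVec, vecMul_sub]
  refine Finset.sum_nonpos fun j _ => ?_
  set a := (y ᵥ* A) j
  set b := (y ᵥ* B) j
  have hmono : 0 ≤ (f a - f b) * (a - b) :=
    (monovary_id_iff.2 hf).sub_mul_sub_nonneg b a
  calc (b - a) * (K j * (f a - f b)) = -(K j * ((f a - f b) * (a - b))) := by ring
    _ ≤ 0 := neg_nonpos.2 (mul_nonneg (hK j) hmono)

theorem chemical_entropy_production_nonpositive_general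
    (ns nr : ℕ)
    (W : Fin ns → ℝ)
    (νf νr : Fin ns → Fin nr → ℝ)
    (Ks : Fin nr → ℝ) (hKs : ∀ j, 0 < Ks j)
    (μ : Fin ns → ℝ)
    (q : Fin nr → ℝ)
    (hq : ∀ j, q j = Ks j *
      (Real.exp (∑ i, νf i j * W i * μ i) - Real.exp (∑ i, νr i j * W i * μ i)))
    (ω : Fin ns → ℝ)
    (hω : ∀ i, ω i = ∑ j, (νr i j - νf i j) * q j) :
    ∑ i, W i * μ i * ω i ≤ 0 := by
  set y : Fin ns → ℝ := fun i => W i * μ i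
  have hexponent (ν : Fin ns → Fin nr → ℝ) (j : Fin nr) :
      ∑ i, ν i j * W i * μ i = (y ᵥ* ν) j := by
    simp only [vecMul, dotProduct, y]
    exact Finset.sum_congr rfl fun i _ => by ring
  have hq' : q = fun j => Ks j * (Real.exp ((y ᵥ* νf) j) - Real.exp ((y ᵥ* νr) j)) := by
    funext j
    rw [hq, hexponent, hexponent]
  have hω' : ω = (νr - νf) *ᵥ q := by
    funext i
    simp only [hω, mulVec, dotProduct, Pi.sub_apply]
  calc ∑ i, W i * μ i * ω i = y ⬝ᵥ (νr - νf) *ᵥ q := by rw [← hω']; rfl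
    _ ≤ 0 := by
      rw [hq']
      exact dotProduct_sub_mulVec_rates_nonpos Real.exp_monotone νf νr Ks
        (fun j => (hKs j).le) y

/-- Nonpositivity of the chemical entropy production rate (Section 4.2):
for a mass-action system with rates of progress
`q_j = K^s_j [exp((Wν^f_j)ᵀμ) − exp((Wν^r_j)ᵀμ)]` and production rates
`ω_i = Σ_j (ν^r_{ij} − ν^f_{ij}) q_j`, one has `Σ_i W_i μ_i ω_i ≤ 0`. -/
theorem chemical_entropy_production_nonpositive
    (ns nr : ℕ) (hns : 1 ≤ ns) (hnr : 1 ≤ nr)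
    (W : Fin ns → ℝ) (hW : ∀ i, 0 < W i)
    (νf νr : Fin ns → Fin nr → ℝ)
    (Ks : Fin nr → ℝ) (hKs : ∀ j, 0 < Ks j)
    (μ : Fin ns → ℝ)
    (q : Fin nr → ℝ)
    (hq : ∀ j, q j = Ks j *
      (Real.exp (∑ i, νf i j * W i * μ i) - Real.exp (∑ i, νr i j * W i * μ i)))
    (ω : Fin ns → ℝ)
    (hω : ∀ i, ω i = ∑ j, (νr i j - νf i j) * q j) :
    ∑ i, W i * μ i * ω i ≤ 0 :=
  chemical_entropy_production_nonpositive_general ns nr W νf νr Ks hKs μ q hq ω hω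
end

section
/- Let m ≥ 1, let 𝒢 ⊆ ℝ^m be a convex set, let h > 0 and λ > 0, and let F† : ℝ^m × ℝ^m × {−1, 1} → ℝ^m be a numerical flux satisfying the conservation property F†(a, b, 1) = −F†(b, a, −1) for all a, b, and the invariant-region-preserving property: for every Δτ > 0 with Δτ λ / h ≤ 1/2 and all a, b, c ∈ 𝒢, a − (Δτ/h)[F†(a, b, −1) + F†(a, c, 1)] ∈ 𝒢. Let θ_L > 0, θ_R > 0, θ_1, …, θ_{n_q} ≥ 0 with Σ_q θ_q + θ_L + θ_R = 1, and let y(x_1), …, y(x_{n_q}), y(x_L), y(x_R), y_L^−, y_R^− ∈ 𝒢 with ȳ = Σ_q θ_q y(x_q) + θ_L y(x_L) + θ_R y(x_R). Then for every Δt > 0 with Δt λ / h ≤ (1/2) min{θ_L, θ_R}, the updated average ȳ⁺ = ȳ − (Δt/h)[ F†(y(x_L), y_L^−, −1) + F†(y(x_R), y_R^−, 1) ] belongs to 𝒢. -/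
/-!
Split the element average along the weights: `ȳ = Σ θ_q y(x_q) + θ_L y(x_L) + θ_R y(x_R)`, and
give each endpoint value its own first-order three-point update, with the enlarged time step
`Δt / θ_L` (resp. `Δt / θ_R`) and the interior flux `F(y(x_L), y(x_R), 1)` (resp.
`F(y(x_R), y(x_L), -1)`) as the second flux. By conservation these two interior fluxes cancel
in `θ_L z_L + θ_R z_R`, so `ȳ⁺ = Σ θ_q y(x_q) + θ_L z_L + θ_R z_R`. The CFL condition makes both
enlarged steps satisfy `Δτ λ / h ≤ 1/2`, hence `z_L, z_R ∈ 𝒢`, and `ȳ⁺` is a convex combination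
of points of `𝒢`.
-/

open Finset

theorem Convex.sum_add_smul_add_smul_mem {𝕜 E ι : Type*} [Field 𝕜] [LinearOrder 𝕜]
    [IsStrictOrderedRing 𝕜] [AddCommGroup E] [Module 𝕜 E] {s : Set E} (hs : Convex 𝕜 s)
    {t : Finset ι} {w : ι → 𝕜} {y : ι → E} {a b : 𝕜} {u v : E}
    (hw : ∀ i ∈ t, 0 ≤ w i) (ha : 0 ≤ a) (hb : 0 ≤ b) (hsum : ∑ i ∈ t, w i + a + b = 1)
    (hy : ∀ i ∈ t, y i ∈ s) (hu : u ∈ s) (hv : v ∈ s) :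
    ∑ i ∈ t, w i • y i + a • u + b • v ∈ s := by
  classical
  have key := hs.sum_mem (t := t.disjSum (univ : Finset (Fin 2)))
    (w := Sum.elim w ![a, b]) (z := Sum.elim y ![u, v]) ?_ ?_ ?_
  · simpa [sum_disjSum, Fin.sum_univ_two, add_assoc] using key
  · rintro (i | j) hi
    · exact hw i (by simpa using hi)
    · fin_cases j <;> assumption
  · simpa [sum_disjSum, Fin.sum_univ_two, add_assoc] using hsum
  · rintro (i | j) hi
    · exact hy i (by simpa using hi)
    · fin_cases j <;> assumption

section ThreePointScheme

variable {𝕜 E : Type*} [Field 𝕜] [AddCommGroup E] [Module 𝕜 E]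

def threePointUpdate (F : E → E → 𝕜 → E) (h τ : 𝕜) (a b c : E) : E :=
  a - (τ / h) • (F a b (-1) + F a c 1)

theorem smul_threePointUpdate_add_smul_threePointUpdate (F : E → E → 𝕜 → E)
    (hcons : ∀ a b, F a b 1 = -F b a (-1)) {θL θR : 𝕜} (hθL : θL ≠ 0) (hθR : θR ≠ 0)
    (h Δt : 𝕜) (yL yR yLm yRm : E) :
    θL • threePointUpdate F h (Δt / θL) yL yLm yR
        + θR • threePointUpdate F h (Δt / θR) yR yL yRm
      = θL • yL + θR • yR - (Δt / h) • (F yL yLm (-1) + F yR yRm 1) := by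
  have eL : θL * (Δt / θL / h) = Δt / h := by field_simp
  have eR : θR * (Δt / θR / h) = Δt / h := by field_simp
  simp only [threePointUpdate, smul_sub, smul_smul, eL, eR, hcons yL yR]
  module

end ThreePointScheme

theorem div_mul_div_le_half_of_le_half_mul {𝕜 : Type*} [Field 𝕜] [LinearOrder 𝕜]
    [IsStrictOrderedRing 𝕜] {Δt lam h θ : 𝕜} (hθ : 0 < θ)
    (hCFL : Δt * lam / h ≤ 1 / 2 * θ) : Δt / θ * lam / h ≤ 1 / 2 := by
  rw [div_mul_eq_mul_div, div_div, mul_comm θ, ← div_div, div_le_iff₀ hθ]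
  linarith

theorem entropy_bounded_DG_CFL_general
    (m nq : ℕ)
    (G : Set (Fin m → ℝ)) (hG : Convex ℝ G)
    (h lam : ℝ)
    (F : (Fin m → ℝ) → (Fin m → ℝ) → ℝ → (Fin m → ℝ))
    (hcons : ∀ a b, F a b 1 = -F b a (-1))
    (hirp : ∀ Δτ : ℝ, 0 < Δτ → Δτ * lam / h ≤ 1 / 2 →
      ∀ a ∈ G, ∀ b ∈ G, ∀ c ∈ G,
        a - (Δτ / h) • (F a b (-1) + F a c 1) ∈ G)
    (θL θR : ℝ) (θ : Fin nq → ℝ)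
    (hθL : 0 < θL) (hθR : 0 < θR) (hθ : ∀ q, 0 ≤ θ q)
    (hθsum : (∑ q, θ q) + θL + θR = 1)
    (yq : Fin nq → (Fin m → ℝ)) (yL yR yLm yRm : Fin m → ℝ)
    (hyq : ∀ q, yq q ∈ G) (hyL : yL ∈ G) (hyR : yR ∈ G)
    (hyLm : yLm ∈ G) (hyRm : yRm ∈ G)
    (ybar : Fin m → ℝ)
    (hybar : ybar = (∑ q, θ q • yq q) + θL • yL + θR • yR)
    (Δt : ℝ) (hΔt : 0 < Δt)
    (hCFL : Δt * lam / h ≤ (1 / 2) * min θL θR) :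
    ybar - (Δt / h) • (F yL yLm (-1) + F yR yRm 1) ∈ G := by
  have hzL : threePointUpdate F h (Δt / θL) yL yLm yR ∈ G :=
    hirp _ (div_pos hΔt hθL) (div_mul_div_le_half_of_le_half_mul hθL
      (hCFL.trans (by gcongr; exact min_le_left θL θR))) yL hyL yLm hyLm yR hyR
  have hzR : threePointUpdate F h (Δt / θR) yR yL yRm ∈ G :=
    hirp _ (div_pos hΔt hθR) (div_mul_div_le_half_of_le_half_mul hθR
      (hCFL.trans (by gcongr; exact min_le_right θL θR))) yR hyR yL hyL yRm hyRm
  have hsplit : ybar - (Δt / h) • (F yL yLm (-1) + F yR yRm 1)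
      = ∑ q, θ q • yq q + θL • threePointUpdate F h (Δt / θL) yL yLm yR
          + θR • threePointUpdate F h (Δt / θR) yR yL yRm := by
    rw [add_assoc, smul_threePointUpdate_add_smul_threePointUpdate F hcons hθL.ne' hθR.ne',
      hybar]
    abel
  rw [hsplit]
  exact hG.sum_add_smul_add_smul_mem (fun q _ ↦ hθ q) hθL.le hθR.le hθsum (fun q _ ↦ hyq q)
    hzL hzR

/-- Theorem 5.1 (CFL condition for the one-dimensional entropy-bounded DG
scheme): if the numerical flux `F` is conservative and invariant-region
preserving for the convex set `G` under the first-order CFL condition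
`Δτ λ / h ≤ 1/2`, and the element average `ȳ` is a convex combination of
admissible pointwise values, then the forward-Euler updated element average
remains in `G` under `Δt λ / h ≤ (1/2) min{θ_L, θ_R}`. -/
theorem entropy_bounded_DG_CFL
    (m nq : ℕ) (hm : 1 ≤ m)
    (G : Set (Fin m → ℝ)) (hG : Convex ℝ G)
    (h lam : ℝ) (hh : 0 < h) (hlam : 0 < lam)
    (F : (Fin m → ℝ) → (Fin m → ℝ) → ℝ → (Fin m → ℝ))
    (hcons : ∀ a b, F a b 1 = -F b a (-1))
    (hirp : ∀ Δτ : ℝ, 0 < Δτ → Δτ * lam / h ≤ 1 / 2 →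
      ∀ a ∈ G, ∀ b ∈ G, ∀ c ∈ G,
        a - (Δτ / h) • (F a b (-1) + F a c 1) ∈ G)
    (θL θR : ℝ) (θ : Fin nq → ℝ)
    (hθL : 0 < θL) (hθR : 0 < θR) (hθ : ∀ q, 0 ≤ θ q)
    (hθsum : (∑ q, θ q) + θL + θR = 1)
    (yq : Fin nq → (Fin m → ℝ)) (yL yR yLm yRm : Fin m → ℝ)
    (hyq : ∀ q, yq q ∈ G) (hyL : yL ∈ G) (hyR : yR ∈ G)
    (hyLm : yLm ∈ G) (hyRm : yRm ∈ G)
    (ybar : Fin m → ℝ)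
    (hybar : ybar = (∑ q, θ q • yq q) + θL • yL + θR • yR)
    (Δt : ℝ) (hΔt : 0 < Δt)
    (hCFL : Δt * lam / h ≤ (1 / 2) * min θL θR) :
    ybar - (Δt / h) • (F yL yLm (-1) + F yR yRm 1) ∈ G :=
  entropy_bounded_DG_CFL_general m nq G hG h lam F hcons hirp θL θR θ hθL hθR hθ hθsum yq yL yR yLm
    yRm hyq hyL hyR hyLm hyRm ybar hybar Δt hΔt hCFL
end

section
/- Fix d ≥ 1, an integer n_p ≥ 0, a molecular weight W > 0, a universal constant R⁰ > 0, and set R_s = R⁰/W. Fix polynomial coefficients a₀, …, a_{n_p} and reference constants T_ref > 0, C_ref > 0, s_ref°. Define b₁ = a₀ − R_s, b_k = a_{k−1}/k for 2 ≤ k ≤ n_p+1, and fix b₀ ∈ ℝ. For T > 0 and ρ > 0 define u(T) = Σ_{k=0}^{n_p+1} b_k T^k, h(T) = u(T) + R_s T, s(T, ρ) = s_ref° + ∫_{T_ref}^T (Σ_{k=0}^{n_p} a_k τ^k − R_s)/τ dτ − R_s log(ρ/(W C_ref)), and g(T, ρ) = h(T) − T s(T, ρ). For two states (T_L, ρ_L,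 v_L) and (T_R, ρ_R, v_R) with T_L, T_R, ρ_L, ρ_R > 0 and v_L, v_R ∈ ℝ^d, define for any quantity α the jump [[α]] = α_R − α_L, the arithmetic mean ⟨α⟩ = (α_L+α_R)/2, the product α^× = α_L α_R, the logarithmic mean α^ln = (α_R − α_L)/(log α_R − log α_L) if α_L ≠ α_R and α^ln = α_L if α_L = α_R (for positive arguments), and f_r(a,b) = (1/r) Σ_{l=0}^{r−1} a^l b^{r−1−l}. Then [[ (g − ½ Σ_{k=1}^d v_k²)/T ]] = [[1/T]] · 𝖷 + R_s [[ρ]]/ρ^ln − Σ_{k=1}^d [[v_k]] ⟨1/T⟩ ⟨v_k⟩, where 𝖷 = b₀ + b₁/(1/T)^ln + Σ_{r=2}^{n_p+1} b_r f_{r−1}(T_L, T_R) T^× − ½ Σ_{k=1}^d ⟨v_k²⟩. -/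
/-- Logarithmic mean of two (positive) reals. -/
noncomputable def logMean (x y : ℝ) : ℝ :=
  if x = y then x else (y - x) / (Real.log y - Real.log x)

/-- The special averaging operator `f_r(a,b) = (1/r) Σ_{l<r} aˡ b^{r−1−l}`. -/
noncomputable def fAvg (r : ℕ) (a b : ℝ) : ℝ :=
  (1 / (r : ℝ)) * ∑ l ∈ Finset.range r, a ^ l * b ^ (r - 1 - l)

/-!
Up to a state-independent constant,
`g / T = b₀ / T - b₁ log T - ∑ₖ b_{k+2} / (k+1) T^{k+1} + R_s log ρ`:
the relation `a_{k+1} = (k+2) b_{k+2}` merges the polynomial parts of `u / T` and `s`.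
The jump of each term is then rewritten with `[[log T]] = -[[1/T]] / (1/T)^ln`,
`[[log ρ]] = [[ρ]] / ρ^ln` and `[[T^m]] = m f_m(T_L, T_R) [[T]]`, where `[[T]] = -[[1/T]] T^×`;
the kinetic term splits by the product rule `[[v² / T]] = ⟨v²⟩ [[1/T]] + 2 ⟨1/T⟩ ⟨v⟩ [[v]]`.
-/

section

open Finset Real

-- No positivity is needed: if `log x = log y` with `x ≠ y`, both sides are `0` since `a / 0 = 0`.
theorem sub_div_logMean (x y : ℝ) : (y - x) / logMean x y = log y - log x := by
  rcases eq_or_ne x y with rfl | hxy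
  · simp
  rw [logMean, if_neg hxy, div_div_cancel₀ (sub_ne_zero.2 hxy.symm)]

theorem natCast_mul_fAvg_mul_sub (m : ℕ) (x y : ℝ) :
    m * fAvg m x y * (x - y) = x ^ m - y ^ m := by
  rcases eq_or_ne m 0 with rfl | hm
  · simp
  rw [fAvg, ← mul_assoc, mul_one_div_cancel (Nat.cast_ne_zero.2 hm), one_mul, geom_sum₂_mul]

theorem integral_poly_sub_const_div (n : ℕ) (a : ℕ → ℝ) (c : ℝ) {T₀ T : ℝ}
    (hT₀ : 0 < T₀) (hT : 0 < T) :
    ∫ τ in T₀..T, ((∑ k ∈ range (n + 1), a k * τ ^ k) - c) / τ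
      = (a 0 - c) * (log T - log T₀)
        + ∑ k ∈ range n, a (k + 1) / (k + 1) * (T ^ (k + 1) - T₀ ^ (k + 1)) := by
  have hne : ∀ τ ∈ Set.uIcc T₀ T, τ ≠ 0 := fun τ hτ ↦
    (lt_of_lt_of_le (lt_min hT₀ hT) hτ.1).ne'
  have hsplit : Set.EqOn (fun τ ↦ ((∑ k ∈ range (n + 1), a k * τ ^ k) - c) / τ)
      (fun τ ↦ (a 0 - c) * τ⁻¹ + ∑ k ∈ range n, a (k + 1) * τ ^ k) (Set.uIcc T₀ T) := by
    intro τ hτ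
    simp only [sum_range_succ', pow_succ, ← mul_assoc, ← sum_mul]
    field_simp [hne τ hτ]
    ring
  rw [intervalIntegral.integral_congr hsplit, intervalIntegral.integral_add,
    intervalIntegral.integral_const_mul, integral_inv_of_pos hT₀ hT, log_div hT.ne' hT₀.ne',
    intervalIntegral.integral_finsetSum]
  · simp only [intervalIntegral.integral_const_mul, integral_pow]
    congr 1
    exact sum_congr rfl fun k _ ↦ by ring
  · exact fun k _ ↦ (intervalIntegral.intervalIntegrable_pow k).const_mul _
  · exact (intervalIntegral.intervalIntegrable_inv hne continuousOn_id).const_mul _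
  · exact (continuous_finsetSum _ fun k _ ↦
      continuous_const.mul (continuous_pow k)).intervalIntegrable _ _

theorem one_div_sub_one_div_mul_sum_fAvg (n : ℕ) (b : ℕ → ℝ) {x y : ℝ} (hx : x ≠ 0) (hy : y ≠ 0) :
    (1 / y - 1 / x) * ∑ r ∈ Icc 2 (n + 1), b r * fAvg (r - 1) x y * (x * y)
      = ∑ k ∈ range n, b (k + 2) / (k + 1) * x ^ (k + 1)
        - ∑ k ∈ range n, b (k + 2) / (k + 1) * y ^ (k + 1) := by
  rw [← Ico_add_one_right_eq_Icc, sum_Ico_eq_sum_range, mul_sum, ← sum_sub_distrib]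
  refine sum_congr (by simp) fun k _ ↦ ?_
  have h := natCast_mul_fAvg_mul_sub (k + 1) x y
  rw [show 2 + k - 1 = k + 1 by omega, add_comm 2 k]
  push_cast at h
  field_simp
  linear_combination b (k + 2) * h

theorem kinetic_div_sub_kinetic_div {ι : Type*} [Fintype ι] (vL vR : ι → ℝ) (TL TR : ℝ) :
    (1 / 2) * (∑ k, vR k ^ 2) / TR - (1 / 2) * (∑ k, vL k ^ 2) / TL
      = (1 / TR - 1 / TL) * ((1 / 2) * ∑ k, (vL k ^ 2 + vR k ^ 2) / 2)
        + ∑ k, (vR k - vL k) * ((1 / TL + 1 / TR) / 2) * ((vL k + vR k) / 2) := by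
  simp only [mul_sum, sum_div, ← sum_sub_distrib, ← sum_add_distrib]
  exact sum_congr rfl fun k _ ↦ by ring


theorem exists_gibbs_div_eq (np : ℕ) (W Rs Cref Tref sref : ℝ) (hWC : W * Cref ≠ 0)
    (hTref : 0 < Tref) (a b : ℕ → ℝ) (hb1 : b 1 = a 0 - Rs)
    (hbk : ∀ k, 2 ≤ k → k ≤ np + 1 → b k = a (k - 1) / (k : ℝ))
    (u h : ℝ → ℝ) (s g : ℝ → ℝ → ℝ)
    (hu : ∀ T, u T = ∑ k ∈ range (np + 2), b k * T ^ k)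
    (hh : ∀ T, h T = u T + Rs * T)
    (hs : ∀ T ρ, s T ρ = sref
      + (∫ τ in Tref..T, ((∑ k ∈ range (np + 1), a k * τ ^ k) - Rs) / τ)
      - Rs * log (ρ / (W * Cref)))
    (hg : ∀ T ρ, g T ρ = h T - T * s T ρ) :
    ∃ C, ∀ T ρ, 0 < T → ρ ≠ 0 → g T ρ / T
      = b 0 / T - b 1 * log T - ∑ k ∈ range np, b (k + 2) / (k + 1) * T ^ (k + 1)
        + Rs * log ρ + C := by
  refine ⟨b 1 + Rs - sref + b 1 * log Tref + ∑ k ∈ range np, a (k + 1) / (k + 1) * Tref ^ (k + 1)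
    - Rs * log (W * Cref), fun T ρ hT hρ ↦ ?_⟩
  have hu_div : u T / T = b 0 / T + b 1 + ∑ k ∈ range np, b (k + 2) * T ^ (k + 1) := by
    have hshift : ∑ k ∈ range np, b (k + 1 + 1) * T ^ (k + 1 + 1)
        = (∑ k ∈ range np, b (k + 2) * T ^ (k + 1)) * T := by
      rw [sum_mul]
      exact sum_congr rfl fun k _ ↦ by ring
    rw [hu, sum_range_succ', sum_range_succ', hshift]
    field_simp
    ring
  have hpoly : ∑ k ∈ range np, b (k + 2) * T ^ (k + 1)
        - ∑ k ∈ range np, a (k + 1) / (k + 1) * (T ^ (k + 1) - Tref ^ (k + 1))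
      = ∑ k ∈ range np, a (k + 1) / (k + 1) * Tref ^ (k + 1)
        - ∑ k ∈ range np, b (k + 2) / (k + 1) * T ^ (k + 1) := by
    rw [← sum_sub_distrib, ← sum_sub_distrib]
    refine sum_congr rfl fun k hk ↦ ?_
    rw [hbk (k + 2) (by omega) (by simp at hk; omega)]
    push_cast
    field_simp
    ring
  have hg_div : g T ρ / T = u T / T + Rs - s T ρ := by
    rw [hg, hh]
    field_simp
  rw [hg_div, hu_div, hs, integral_poly_sub_const_div np a Rs hTref hT, log_div hρ hWC, ← hb1]
  linear_combination hpoly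

end

theorem species_entropy_variable_jump_identity_general
    (d np : ℕ)
    (W : ℝ) (hW : 0 < W)
    (Rs : ℝ)
    (a : ℕ → ℝ) (Tref Cref sref : ℝ) (hTref : 0 < Tref) (hCref : 0 < Cref)
    (b : ℕ → ℝ) (hb1 : b 1 = a 0 - Rs)
    (hbk : ∀ k, 2 ≤ k → k ≤ np + 1 → b k = a (k - 1) / (k : ℝ))
    (u h : ℝ → ℝ) (s g : ℝ → ℝ → ℝ)
    (hu : ∀ T, u T = ∑ k ∈ Finset.range (np + 2), b k * T ^ k)
    (hh : ∀ T, h T = u T + Rs * T)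
    (hs : ∀ T ρ, s T ρ = sref
      + (∫ τ in Tref..T, ((∑ k ∈ Finset.range (np + 1), a k * τ ^ k) - Rs) / τ)
      - Rs * Real.log (ρ / (W * Cref)))
    (hg : ∀ T ρ, g T ρ = h T - T * s T ρ)
    (TL TR ρL ρR : ℝ) (hTL : 0 < TL) (hTR : 0 < TR) (hρL : 0 < ρL) (hρR : 0 < ρR)
    (vL vR : Fin d → ℝ)
    (X : ℝ)
    (hX : X = b 0 + b 1 / logMean (1 / TL) (1 / TR)
      + (∑ r ∈ Finset.Icc 2 (np + 1), b r * fAvg (r - 1) TL TR * (TL * TR))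
      - (1 / 2) * ∑ k, ((vL k) ^ 2 + (vR k) ^ 2) / 2) :
    ((g TR ρR - (1 / 2) * ∑ k, (vR k) ^ 2) / TR)
        - ((g TL ρL - (1 / 2) * ∑ k, (vL k) ^ 2) / TL)
      = (1 / TR - 1 / TL) * X
        + Rs * (ρR - ρL) / logMean ρL ρR
        - ∑ k, (vR k - vL k) * ((1 / TL + 1 / TR) / 2) * ((vL k + vR k) / 2) := by
  obtain ⟨C, hC⟩ := exists_gibbs_div_eq np W Rs Cref Tref sref (mul_pos hW hCref).ne' hTref
    a b hb1 hbk u h s g hu hh hs hg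
  have hlogT : (1 / TR - 1 / TL) / logMean (1 / TL) (1 / TR) = Real.log TL - Real.log TR := by
    rw [sub_div_logMean, one_div, one_div, Real.log_inv, Real.log_inv]
    ring
  rw [hX, sub_div, sub_div, hC TR ρR hTR hρR.ne', hC TL ρL hTL hρL.ne']
  linear_combination (-1 : ℝ) * kinetic_div_sub_kinetic_div vL vR TL TR
    - one_div_sub_one_div_mul_sum_fAvg np b hTL.ne' hTR.ne'
    - b 1 * hlogT - Rs * sub_div_logMean ρL ρR

/-- Species-component jump identity (Equation (49)) underlying the
entropy-conservative two-point numerical state: for a thermally perfect gas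
with `c_p(T) = Σ_k a_k T^k`, internal energy `u`, enthalpy `h = u + R_s T`,
entropy `s`, and Gibbs function `g = h − T s`, the jump of the entropy variable
`(g − ½|v|²)/T` decomposes into jumps of `1/T`, `ρ`, and `v_k`. -/
theorem species_entropy_variable_jump_identity
    (d np : ℕ) (hd : 1 ≤ d)
    (W R0 : ℝ) (hW : 0 < W) (hR0 : 0 < R0)
    (Rs : ℝ) (hRsdef : Rs = R0 / W)
    (a : ℕ → ℝ) (Tref Cref sref : ℝ) (hTref : 0 < Tref) (hCref : 0 < Cref)
    (b : ℕ → ℝ) (hb1 : b 1 = a 0 - Rs)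
    (hbk : ∀ k, 2 ≤ k → k ≤ np + 1 → b k = a (k - 1) / (k : ℝ))
    (u h : ℝ → ℝ) (s g : ℝ → ℝ → ℝ)
    (hu : ∀ T, u T = ∑ k ∈ Finset.range (np + 2), b k * T ^ k)
    (hh : ∀ T, h T = u T + Rs * T)
    (hs : ∀ T ρ, s T ρ = sref
      + (∫ τ in Tref..T, ((∑ k ∈ Finset.range (np + 1), a k * τ ^ k) - Rs) / τ)
      - Rs * Real.log (ρ / (W * Cref)))
    (hg : ∀ T ρ, g T ρ = h T - T * s T ρ)
    (TL TR ρL ρR : ℝ) (hTL : 0 < TL) (hTR : 0 < TR) (hρL : 0 < ρL) (hρR : 0 < ρR)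
    (vL vR : Fin d → ℝ)
    (X : ℝ)
    (hX : X = b 0 + b 1 / logMean (1 / TL) (1 / TR)
      + (∑ r ∈ Finset.Icc 2 (np + 1), b r * fAvg (r - 1) TL TR * (TL * TR))
      - (1 / 2) * ∑ k, ((vL k) ^ 2 + (vR k) ^ 2) / 2) :
    ((g TR ρR - (1 / 2) * ∑ k, (vR k) ^ 2) / TR)
        - ((g TL ρL - (1 / 2) * ∑ k, (vL k) ^ 2) / TL)
      = (1 / TR - 1 / TL) * X
        + Rs * (ρR - ρL) / logMean ρL ρR
        - ∑ k, (vR k - vL k) * ((1 / TL + 1 / TR) / 2) * ((vL k + vR k) / 2) :=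
  species_entropy_variable_jump_identity_general d np W hW Rs a Tref Cref sref hTref hCref b hb1 hbk
    u h s g hu hh hs hg TL TR ρL ρR hTL hTR hρL hρR vL vR X hX
end

section
/- Fix d, n_s ≥ 1 and n_p ≥ 0; for each species i fix W_i > 0, R_{s,i} = R⁰/W_i with R⁰ > 0, coefficients a_{i0}, …, a_{i,n_p}, reference constants T_ref > 0, C_ref > 0, s°_{ref,i}, and set b_{i1} = a_{i0} − R_{s,i}, b_{ik} = a_{i,k−1}/k for 2 ≤ k ≤ n_p+1, with b_{i0} ∈ ℝ fixed. For ρ_i > 0, T > 0, v ∈ ℝ^d define u_i(T) = Σ_{k=0}^{n_p+1} b_{ik}T^k, h_i = u_i + R_{s,i}T, s_i = s°_{ref,i} + ∫_{T_ref}^T (Σ_k a_{ik}τ^k − R_{s,i})/τ dτ − R_{s,i} log(ρ_i/(W_i C_ref)), g_i = h_i − T s_i, the conservative state y = (ρ₁,…,ρ_{n_s}, ρv₁,…,ρv_d, ρe_t) with ρ = Σ_i ρ_i, ρ e_t = Σ_i ρ_i u_i(T) + ½ρ|v|², the entropy variables v(y) = ((g₁ − ½|v|²)/T, …, (g_{n_s}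 − ½|v|²)/T, v₁/T, …, v_d/T, −1/T), and the entropy potential 𝒰(y) = Σ_{i=1}^{n_s} R_{s,i} ρ_i. Let y‡(y_L, y_R) be the two-point numerical state with partial-density components ρ_i^ln, momentum components Σ_i ρ_i^ln ⟨v_k⟩, and energy component Σ_k Σ_i ρ_i^ln ⟨v_k⟩⟨v_k⟩ + Σ_i ρ_i^ln [ b_{i0} + b_{i1}/(1/T)^ln + Σ_{r=2}^{n_p+1} b_{ir} f_{r−1}(T_L,T_R) T^× − ½Σ_k ⟨v_k²⟩ ], where ⟨α⟩ = (α_L+α_R)/2, α^× = α_Lα_R, α^ln is the logarithmic mean, and f_r(a,b) = (1/r)Σ_{l=0}^{r−1} a^l b^{r−1−l}. Then for all admissible states y_L, y_R: ( v(y_R) − v(y_L) )ᵀ y‡(y_L, y_R) = 𝒰(y_R) − 𝒰(y_L). -/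
/-!
Since `g/T = u/T + R − s`, the species part of `(v_R − v_L)ᵀ y‡` reduces, after the jump
`Δ(1/T)` is distributed over the numerical energy, to a term-by-term comparison between the jump
of `u/T − s°(T)` and `Δ(1/T) · e‡`: the `b₀` terms cancel outright, the `b₁` term because
`Δ(1/T) / (1/T)^ln = −Δ log T`, and each `b_r` term because
`f_{r−1}(T_L, T_R) (T_L − T_R) = (T_L^{r−1} − T_R^{r−1}) / (r − 1)` (a geometric sum).
What survives is `R_{s,i} Δ log ρ_i`, which the logarithmic mean `ρ_i^ln` turns into
`R_{s,i} Δρ_i`. The kinetic terms cancel identically since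
`⟨v⟩² − ⟨v²⟩/2 = v_L v_R / 2`.
-/

open Finset Real

theorem logMean_mul_log_sub_log {x y : ℝ} (hx : 0 < x) (hy : 0 < y) :
    logMean x y * (log y - log x) = y - x := by
  unfold logMean
  split_ifs with hxy
  · simp [hxy]
  · have hlog : log y - log x ≠ 0 :=
      sub_ne_zero.mpr fun h => hxy (log_injOn_pos hx hy h.symm)
    field_simp

theorem sub_mul_div_logMean {x y : ℝ} (hx : 0 < x) (hy : 0 < y) (c : ℝ) :
    (x - y) * (c / logMean x y) = c * (log x - log y) := by
  have key := logMean_mul_log_sub_log hx hy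
  by_cases hL : logMean x y = 0
  · rw [hL, zero_mul] at key
    simp [sub_eq_zero.mp key.symm]
  · rw [← neg_sub y x, ← key]
    field_simp
    ring

theorem fAvg_mul_sub (r : ℕ) (x y : ℝ) : fAvg r x y * (x - y) = (x ^ r - y ^ r) / r := by
  rw [fAvg, mul_assoc, geom_sum₂_mul]
  ring

theorem sum_range_add_two_div (n : ℕ) (b : ℕ → ℝ) {T : ℝ} (hT : T ≠ 0) :
    (∑ k ∈ range (n + 2), b k * T ^ k) / T
      = b 0 / T + b 1 + ∑ m ∈ range n, b (m + 2) * T ^ (m + 1) := by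
  have hterm (m : ℕ) : b (m + 1 + 1) * T ^ (m + 1 + 1) / T = b (m + 2) * T ^ (m + 1) := by
    rw [pow_succ _ (m + 1)]
    field_simp
  simp only [sum_range_succ' _ (n + 1), sum_range_succ' _ n, add_div, sum_div, hterm]
  field_simp
  ring

theorem sum_Icc_two_eq_sum_range {M : Type*} [AddCommMonoid M] (n : ℕ) (f : ℕ → M) :
    ∑ r ∈ Icc 2 (n + 1), f r = ∑ m ∈ range n, f (m + 2) := by
  rw [range_eq_Ico, sum_Ico_add' f 0 n 2, zero_add, ← Ico_add_one_right_eq_Icc]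
  rfl

/-- The temperature part `∫^T (c_p(τ) − R) / τ dτ` of a species entropy,
`c_p = Σₖ aₖ τᵏ`. -/
noncomputable def thermalEntropy (n : ℕ) (a : ℕ → ℝ) (R T : ℝ) : ℝ :=
  (a 0 - R) * log T + ∑ m ∈ range n, a (m + 1) / (m + 1) * T ^ (m + 1)

theorem hasDerivAt_thermalEntropy (n : ℕ) (a : ℕ → ℝ) (R : ℝ) {T : ℝ} (hT : T ≠ 0) :
    HasDerivAt (thermalEntropy n a R) (((∑ k ∈ range (n + 1), a k * T ^ k) - R) / T) T := by
  have hlog := (hasDerivAt_log hT).const_mul (a 0 - R)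
  have hpoly := HasDerivAt.fun_sum fun m (_ : m ∈ range n) =>
    (hasDerivAt_pow (m + 1) T).const_mul (a (m + 1) / (m + 1))
  have hterm (m : ℕ) :
      a (m + 1) / (m + 1) * (↑(m + 1) * T ^ (m + 1 - 1)) = a (m + 1) * T ^ (m + 1) / T := by
    push_cast
    field_simp
    ring
  refine (hlog.add hpoly).congr_deriv ?_
  rw [sum_range_succ', sum_congr rfl fun m _ => hterm m, ← sum_div]
  field_simp
  ring

theorem integral_eq_thermalEntropy_sub (n : ℕ) (a : ℕ → ℝ) (R : ℝ) {x y : ℝ}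
    (hx : 0 < x) (hy : 0 < y) :
    ∫ τ in x..y, ((∑ k ∈ range (n + 1), a k * τ ^ k) - R) / τ
      = thermalEntropy n a R y - thermalEntropy n a R x := by
  have hpos : ∀ τ ∈ Set.uIcc x y, τ ≠ 0 := fun τ hτ => ((lt_min hx hy).trans_le hτ.1).ne'
  refine intervalIntegral.integral_eq_sub_of_hasDerivAt
    (fun τ hτ => hasDerivAt_thermalEntropy n a R (hpos τ hτ)) ?_
  exact (ContinuousOn.div (by fun_prop) continuousOn_id hpos).intervalIntegrable

theorem jump_internalEnergy_div_sub_thermalEntropy (n : ℕ) (a b : ℕ → ℝ) (R : ℝ)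
    (hb1 : b 1 = a 0 - R) (hbk : ∀ k, 2 ≤ k → k ≤ n + 1 → b k = a (k - 1) / k)
    {TL TR : ℝ} (hTL : 0 < TL) (hTR : 0 < TR) :
    (∑ k ∈ range (n + 2), b k * TR ^ k) / TR - (∑ k ∈ range (n + 2), b k * TL ^ k) / TL
        - (thermalEntropy n a R TR - thermalEntropy n a R TL)
      = (1 / TR - 1 / TL) * (b 0 + b 1 / logMean (1 / TL) (1 / TR)
          + ∑ r ∈ Icc 2 (n + 1), b r * fAvg (r - 1) TL TR * (TL * TR)) := by
  have hlog : (1 / TR - 1 / TL) * (b 1 / logMean (1 / TL) (1 / TR))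
      = -(b 1 * (log TR - log TL)) := by
    rw [← neg_sub, neg_mul, sub_mul_div_logMean (by positivity) (by positivity), one_div, one_div,
      log_inv, log_inv]
    ring
  have hmono : ∀ m ∈ range n,
      b (m + 2) * TR ^ (m + 1) - b (m + 2) * TL ^ (m + 1)
        - (a (m + 1) / (m + 1) * TR ^ (m + 1) - a (m + 1) / (m + 1) * TL ^ (m + 1))
      = (1 / TR - 1 / TL) * (b (m + 2) * fAvg (m + 2 - 1) TL TR * (TL * TR)) := by
    intro m hm
    have hb := hbk (m + 2) (by omega) (by rw [mem_range] at hm; omega)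
    have hf := fAvg_mul_sub (m + 1) TL TR
    have hidx : m + 2 - 1 = m + 1 := rfl
    rw [hidx] at hb ⊢
    have hshift : (1 / TR - 1 / TL) * (b (m + 2) * fAvg (m + 1) TL TR * (TL * TR))
        = b (m + 2) * (fAvg (m + 1) TL TR * (TL - TR)) := by
      field_simp
    rw [hshift, hf, hb]
    push_cast
    field_simp
    ring
  rw [sum_range_add_two_div n b hTR.ne', sum_range_add_two_div n b hTL.ne',
    sum_Icc_two_eq_sum_range, mul_add, mul_add, hlog, thermalEntropy, thermalEntropy, hb1]
  have hsum := sum_congr rfl hmono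
  simp only [sum_sub_distrib, ← mul_sum] at hsum
  rw [← hsum]
  field_simp
  ring

theorem jump_kineticEnergy_div {ι : Type*} [Fintype ι] (vL vR : ι → ℝ) (TL TR : ℝ) :
    (1 / 2) * (∑ k, vR k ^ 2) / TR - (1 / 2) * (∑ k, vL k ^ 2) / TL
      = ∑ k, (vR k / TR - vL k / TL) * ((vL k + vR k) / 2)
        + (1 / TL - 1 / TR) * (∑ k, ((vL k + vR k) / 2) * ((vL k + vR k) / 2)
          - (1 / 2) * ∑ k, (vL k ^ 2 + vR k ^ 2) / 2) := by
  simp only [mul_sum, sum_div, ← sum_sub_distrib, ← sum_add_distrib]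
  exact sum_congr rfl fun k _ => by ring

theorem numState_entropy_conservative_general
    (d ns np : ℕ)
    (W : Fin ns → ℝ) (hW : ∀ i, 0 < W i)
    (Rs : Fin ns → ℝ)
    (a : Fin ns → ℕ → ℝ)
    (Tref Cref : ℝ) (hTref : 0 < Tref) (hCref : 0 < Cref)
    (sref : Fin ns → ℝ)
    (b : Fin ns → ℕ → ℝ)
    (hb1 : ∀ i, b i 1 = a i 0 - Rs i)
    (hbk : ∀ i k, 2 ≤ k → k ≤ np + 1 → b i k = a i (k - 1) / (k : ℝ))
    (u h : Fin ns → ℝ → ℝ) (s g : Fin ns → ℝ → ℝ → ℝ)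
    (hu : ∀ i T, u i T = ∑ k ∈ Finset.range (np + 2), b i k * T ^ k)
    (hh : ∀ i T, h i T = u i T + Rs i * T)
    (hs : ∀ i T ρ, s i T ρ = sref i
      + (∫ τ in Tref..T, ((∑ k ∈ Finset.range (np + 1), a i k * τ ^ k) - Rs i) / τ)
      - Rs i * Real.log (ρ / (W i * Cref)))
    (hg : ∀ i T ρ, g i T ρ = h i T - T * s i T ρ)
    (ρL ρR : Fin ns → ℝ) (hρL : ∀ i, 0 < ρL i) (hρR : ∀ i, 0 < ρR i)
    (vL vR : Fin d → ℝ) (TL TR : ℝ) (hTL : 0 < TL) (hTR : 0 < TR)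
    (Edag : ℝ)
    (hEdag : Edag =
      (∑ k, ∑ i, logMean (ρL i) (ρR i) * ((vL k + vR k) / 2) * ((vL k + vR k) / 2))
      + ∑ i, logMean (ρL i) (ρR i) *
          (b i 0 + b i 1 / logMean (1 / TL) (1 / TR)
            + (∑ r ∈ Finset.Icc 2 (np + 1), b i r * fAvg (r - 1) TL TR * (TL * TR))
            - (1 / 2) * ∑ k, ((vL k) ^ 2 + (vR k) ^ 2) / 2)) :
    (∑ i, (((g i TR (ρR i) - (1 / 2) * ∑ k, (vR k) ^ 2) / TR)
          - ((g i TL (ρL i) - (1 / 2) * ∑ k, (vL k) ^ 2) / TL))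
        * logMean (ρL i) (ρR i))
      + (∑ k, (vR k / TR - vL k / TL)
          * ((∑ i, logMean (ρL i) (ρR i)) * ((vL k + vR k) / 2)))
      + ((-(1 / TR)) - (-(1 / TL))) * Edag
      = ∑ i, Rs i * (ρR i - ρL i) := by
  have hspecies (i : Fin ns) : g i TR (ρR i) / TR - g i TL (ρL i) / TL
      = (1 / TR - 1 / TL) * (b i 0 + b i 1 / logMean (1 / TL) (1 / TR)
          + ∑ r ∈ Icc 2 (np + 1), b i r * fAvg (r - 1) TL TR * (TL * TR))
        + Rs i * (log (ρR i) - log (ρL i)) := by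
    have hgT (T ρ : ℝ) (hT : 0 < T) (hρ : 0 < ρ) : g i T ρ / T
        = (∑ k ∈ range (np + 2), b i k * T ^ k) / T + Rs i - sref i
          - (thermalEntropy np (a i) (Rs i) T - thermalEntropy np (a i) (Rs i) Tref)
          + Rs i * (log ρ - log (W i * Cref)) := by
      rw [hg, hh, hu, hs, integral_eq_thermalEntropy_sub np (a i) (Rs i) hTref hT,
        log_div hρ.ne' (mul_pos (hW i) hCref).ne']
      field_simp
      ring
    rw [hgT TR (ρR i) hTR (hρR i), hgT TL (ρL i) hTL (hρL i)]
    linear_combination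
      jump_internalEnergy_div_sub_thermalEntropy np (a i) (b i) (Rs i) (hb1 i) (hbk i) hTL hTR
  have hmomentum :
      ∑ k, (vR k / TR - vL k / TL) * ((∑ i, logMean (ρL i) (ρR i)) * ((vL k + vR k) / 2))
      = ∑ i, logMean (ρL i) (ρR i) * ∑ k, (vR k / TR - vL k / TL) * ((vL k + vR k) / 2) := by
    simp only [sum_mul, mul_sum]
    rw [sum_comm]
    exact sum_congr rfl fun i _ => sum_congr rfl fun k _ => by ring
  have hkinetic : ∑ k, ∑ i, logMean (ρL i) (ρR i) * ((vL k + vR k) / 2) * ((vL k + vR k) / 2)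
      = ∑ i, logMean (ρL i) (ρR i) * ∑ k, ((vL k + vR k) / 2) * ((vL k + vR k) / 2) := by
    rw [sum_comm]
    simp only [mul_sum, mul_assoc]
  rw [hEdag, hmomentum, hkinetic, mul_add, mul_sum (a := -(1 / TR) - -(1 / TL)),
    mul_sum (a := -(1 / TR) - -(1 / TL)), ← sum_add_distrib, ← sum_add_distrib,
    ← sum_add_distrib]
  refine sum_congr rfl fun i _ => ?_
  linear_combination logMean (ρL i) (ρR i) * (hspecies i - jump_kineticEnergy_div vL vR TL TR)
    + Rs i * logMean_mul_log_sub_log (hρL i) (hρR i)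

/-- Entropy-conservation property of the two-point numerical state (the main
claim of the theorem in Section 6.3.1): for the multicomponent thermally
perfect gas Euler system with entropy variables
`v = ((g₁ − ½|v|²)/T, …, (g_{n_s} − ½|v|²)/T, v₁/T, …, v_d/T, −1/T)` and
entropy potential `𝒰 = Σᵢ R_{s,i} ρᵢ`, the numerical state `y‡` of
Equations (50)–(51) satisfies `(v_R − v_L)ᵀ y‡ = 𝒰_R − 𝒰_L`. -/
theorem numState_entropy_conservative
    (d ns np : ℕ) (hd : 1 ≤ d) (hns : 1 ≤ ns)
    (R0 : ℝ) (hR0 : 0 < R0)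
    (W : Fin ns → ℝ) (hW : ∀ i, 0 < W i)
    (Rs : Fin ns → ℝ) (hRs : ∀ i, Rs i = R0 / W i)
    (a : Fin ns → ℕ → ℝ)
    (Tref Cref : ℝ) (hTref : 0 < Tref) (hCref : 0 < Cref)
    (sref : Fin ns → ℝ)
    (b : Fin ns → ℕ → ℝ)
    (hb1 : ∀ i, b i 1 = a i 0 - Rs i)
    (hbk : ∀ i k, 2 ≤ k → k ≤ np + 1 → b i k = a i (k - 1) / (k : ℝ))
    (u h : Fin ns → ℝ → ℝ) (s g : Fin ns → ℝ → ℝ → ℝ)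
    (hu : ∀ i T, u i T = ∑ k ∈ Finset.range (np + 2), b i k * T ^ k)
    (hh : ∀ i T, h i T = u i T + Rs i * T)
    (hs : ∀ i T ρ, s i T ρ = sref i
      + (∫ τ in Tref..T, ((∑ k ∈ Finset.range (np + 1), a i k * τ ^ k) - Rs i) / τ)
      - Rs i * Real.log (ρ / (W i * Cref)))
    (hg : ∀ i T ρ, g i T ρ = h i T - T * s i T ρ)
    (ρL ρR : Fin ns → ℝ) (hρL : ∀ i, 0 < ρL i) (hρR : ∀ i, 0 < ρR i)
    (vL vR : Fin d → ℝ) (TL TR : ℝ) (hTL : 0 < TL) (hTR : 0 < TR)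
    (Edag : ℝ)
    (hEdag : Edag =
      (∑ k, ∑ i, logMean (ρL i) (ρR i) * ((vL k + vR k) / 2) * ((vL k + vR k) / 2))
      + ∑ i, logMean (ρL i) (ρR i) *
          (b i 0 + b i 1 / logMean (1 / TL) (1 / TR)
            + (∑ r ∈ Finset.Icc 2 (np + 1), b i r * fAvg (r - 1) TL TR * (TL * TR))
            - (1 / 2) * ∑ k, ((vL k) ^ 2 + (vR k) ^ 2) / 2)) :
    (∑ i, (((g i TR (ρR i) - (1 / 2) * ∑ k, (vR k) ^ 2) / TR)
          - ((g i TL (ρL i) - (1 / 2) * ∑ k, (vL k) ^ 2) / TL))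
        * logMean (ρL i) (ρR i))
      + (∑ k, (vR k / TR - vL k / TL)
          * ((∑ i, logMean (ρL i) (ρR i)) * ((vL k + vR k) / 2)))
      + ((-(1 / TR)) - (-(1 / TL))) * Edag
      = ∑ i, Rs i * (ρR i - ρL i) :=
  numState_entropy_conservative_general d ns np W hW Rs a Tref Cref hTref hCref sref b hb1 hbk u h s
    g hu hh hs hg ρL ρR hρL hρR vL vR TL TR hTL hTR Edag hEdag
end

section
/- Let m ≥ 1, n ≥ 2, and let Q ∈ ℝ^{n×n} satisfy Q + Qᵀ = B, where B is the diagonal matrix with B₁₁ = −1, B_{nn} = 1, and all other entries zero, and Q·𝟙 = 0 where 𝟙 is the all-ones vector. Let D ⊆ ℝ^m, and let U : D → ℝ, v : D → ℝ^m, 𝒰 : D → ℝ satisfy 𝒰(y) = v(y)ᵀ y − U(y) for all y ∈ D. Let F : D × D → ℝ^m be symmetric (F(a,b) = F(b,a)), consistent (F(y,y) = y), and entropy-conservative: ( v(b) − v(a) )ᵀ F(a,b) = 𝒰(b) − 𝒰(a) for all a, b ∈ D. Then for any y₁, …, y_n ∈ D: 2 Σ_{i=1}^n Σ_{j=1}^n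 Q_{ij} v(y_i)ᵀ F(y_i, y_j) = U(y_n) − U(y₁). -/
/-!
Put `tᵢⱼ = v(yᵢ)ᵀ F(yᵢ, yⱼ)`. Symmetry and entropy conservation of `F` give
`tᵢⱼ - tⱼᵢ = 𝒰(yᵢ) - 𝒰(yⱼ)`, so
`2 Σ Qᵢⱼ tᵢⱼ = Σ Qᵢⱼ (𝒰(yᵢ) - 𝒰(yⱼ)) + Σ (Q + Qᵀ)ᵢⱼ tⱼᵢ`.
The second sum only sees the diagonal of `B`, where consistency gives `tᵢᵢ = v(yᵢ)ᵀ yᵢ`;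
the first is `-Σ Bᵢᵢ 𝒰(yᵢ)`, because `Q𝟙 = 0` and hence `𝟙ᵀQ = 𝟙ᵀB`.
Together they give `Σ Bᵢᵢ (v(yᵢ)ᵀ yᵢ - 𝒰(yᵢ)) = Σ Bᵢᵢ U(yᵢ) = U(yₙ) - U(y₁)`.
-/

open Matrix Finset

section SummationByParts

variable {ι R : Type*} [Fintype ι] [CommRing R]

theorem Matrix.sum_sum_mul_sub (Q : Matrix ι ι R) (φ : ι → R) :
    ∑ i, ∑ j, Q i j * (φ i - φ j) = φ ⬝ᵥ (Q *ᵥ 1) - (1 ᵥ* Q) ⬝ᵥ φ := by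
  simp only [mul_sub, sum_sub_distrib, dotProduct, mulVec, vecMul, Pi.one_apply, mul_one,
    one_mul, mul_sum, sum_mul]
  rw [sum_comm (f := fun i j => Q i j * φ j)]
  simp only [mul_comm]

variable [DecidableEq ι] {Q : Matrix ι ι R} {b : ι → R}

theorem Matrix.one_vecMul_eq_of_add_transpose_eq_diagonal (hQ : Q + Qᵀ = diagonal b)
    (hQ1 : Q *ᵥ 1 = 0) : 1 ᵥ* Q = b := by
  rw [eq_sub_of_add_eq hQ, vecMul_sub, vecMul_transpose, hQ1, sub_zero]
  ext i
  simp [vecMul_diagonal]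

theorem Matrix.two_mul_sum_sum_eq_of_add_transpose_eq_diagonal (hQ : Q + Qᵀ = diagonal b)
    (hQ1 : Q *ᵥ 1 = 0) {t : ι → ι → R} {φ : ι → R} (ht : ∀ i j, t i j - t j i = φ i - φ j) :
    2 * ∑ i, ∑ j, Q i j * t i j = b ⬝ᵥ fun i => t i i - φ i := by
  calc 2 * ∑ i, ∑ j, Q i j * t i j
      = ∑ i, ∑ j, (Q i j * (t i j - t j i) + (Q + Qᵀ) i j * t j i) := by
        rw [two_mul]
        nth_rewrite 2 [sum_comm]
        simp only [← sum_add_distrib, add_apply, transpose_apply]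
        congr! 2 with i _ j _
        ring
    _ = ∑ i, ∑ j, Q i j * (φ i - φ j) + ∑ i, b i * t i i := by
        simp only [ht, hQ, diagonal_apply, sum_add_distrib, ite_mul, zero_mul, sum_ite_eq,
          mem_univ, if_true]
    _ = b ⬝ᵥ fun i => t i i - φ i := by
        rw [sum_sum_mul_sub, hQ1, one_vecMul_eq_of_add_transpose_eq_diagonal hQ hQ1,
          dotProduct_zero]
        simp only [dotProduct, mul_sub, sum_sub_distrib]
        ring

end SummationByParts

theorem boundary_eq_diagonal_single_sub_single {n : ℕ} (hn : 2 ≤ n) :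
    Matrix.of (fun (i j : Fin n) =>
      if i = j ∧ (i : ℕ) = 0 then (-1 : ℝ)
      else if i = j ∧ (i : ℕ) = n - 1 then 1 else 0) =
    diagonal (Pi.single ⟨n - 1, Nat.sub_lt (Nat.zero_lt_of_lt hn) Nat.one_pos⟩ 1 -
      Pi.single ⟨0, Nat.zero_lt_of_lt hn⟩ 1) := by
  ext i j
  rcases eq_or_ne i j with rfl | hij
  · simp only [Fin.ext_iff, of_apply, true_and, diagonal_apply_eq, Pi.sub_apply, Pi.single_apply]
    split_ifs <;> first | omega | norm_num
  · simp [hij]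

theorem entropy_conservative_flux_antisymm {α κ R : Type*} [Fintype κ] [CommRing R]
    {D : Set α} {𝒰 : α → R} {v : α → κ → R} {F : α → α → κ → R}
    (hsymm : ∀ a ∈ D, ∀ b ∈ D, F a b = F b a)
    (hEC : ∀ a ∈ D, ∀ b ∈ D, (∑ l, (v b l - v a l) * F a b l) = 𝒰 b - 𝒰 a)
    {a b : α} (ha : a ∈ D) (hb : b ∈ D) :
    v a ⬝ᵥ F a b - v b ⬝ᵥ F b a = 𝒰 a - 𝒰 b := by
  rw [← hEC b hb a ha, hsymm b hb a ha, ← sub_dotProduct]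
  rfl

/-- Summation-by-parts telescoping identity underlying the entropy-stability
proof of the temporal DG scheme (Section 6.3.2): if `Q + Qᵀ = B` with
`B = diag(−1, 0, …, 0, 1)`, `Q𝟙 = 0`, `𝒰 = vᵀy − U`, and `F` is a symmetric,
consistent, entropy-conservative two-point numerical state, then
`2 Σᵢⱼ Qᵢⱼ v(yᵢ)ᵀ F(yᵢ,yⱼ) = U(y_n) − U(y₁)`. -/
theorem sbp_telescoping_identity
    (m n : ℕ) (hn : 2 ≤ n)
    (Q : Matrix (Fin n) (Fin n) ℝ)
    (hSBP : Q + Q.transpose = Matrix.of (fun (i j : Fin n) =>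
      if i = j ∧ (i : ℕ) = 0 then (-1 : ℝ)
      else if i = j ∧ (i : ℕ) = n - 1 then 1 else 0))
    (hQ1 : Q.mulVec (fun _ => 1) = 0)
    (D : Set (Fin m → ℝ))
    (U 𝒰 : (Fin m → ℝ) → ℝ) (v : (Fin m → ℝ) → (Fin m → ℝ))
    (F : (Fin m → ℝ) → (Fin m → ℝ) → (Fin m → ℝ))
    (h𝒰 : ∀ y ∈ D, 𝒰 y = (∑ l, v y l * y l) - U y)
    (hsymm : ∀ a ∈ D, ∀ b ∈ D, F a b = F b a)
    (hcons : ∀ y ∈ D, F y y = y)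
    (hEC : ∀ a ∈ D, ∀ b ∈ D, (∑ l, (v b l - v a l) * F a b l) = 𝒰 b - 𝒰 a)
    (y : Fin n → (Fin m → ℝ)) (hy : ∀ i, y i ∈ D) :
    2 * ∑ i, ∑ j, Q i j * (∑ l, v (y i) l * F (y i) (y j) l)
      = U (y ⟨n - 1, by omega⟩) - U (y ⟨0, by omega⟩) := by
  rw [boundary_eq_diagonal_single_sub_single hn] at hSBP
  have hdiag : ∀ i, v (y i) ⬝ᵥ F (y i) (y i) - 𝒰 (y i) = U (y i) := fun i => by
    rw [hcons _ (hy i), h𝒰 _ (hy i)]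
    simp only [dotProduct, sub_sub_cancel]
  have key := two_mul_sum_sum_eq_of_add_transpose_eq_diagonal hSBP hQ1
    (t := fun i j => v (y i) ⬝ᵥ F (y i) (y j)) (φ := fun i => 𝒰 (y i))
    fun i j => entropy_conservative_flux_antisymm hsymm hEC (hy i) (hy j)
  simp only [hdiag, sub_dotProduct, single_dotProduct, one_mul] at key
  exact key
end

section
/- Fix d, n_s ≥ 1 and n_p ≥ 0; for each species i fix W_i > 0, R_{s,i} = R⁰/W_i with R⁰ > 0, coefficients b_{i0}, …, b_{i,n_p+1}, and arbitrary real functions s_i = s_i(T, ρ_i) (the species specific entropies). For ρ_i > 0, T > 0, v ∈ ℝ^d, define u_i(T) = Σ_{k=0}^{n_p+1} b_{ik}T^k, h_i = u_i + R_{s,i}T, g_i = h_i − T s_i, ρ = Σ_i ρ_i, s = Σ_i (ρ_i/ρ) s_i, the conservative state y = (ρ₁, …, ρ_{n_s}, ρv₁, …, ρv_d, ρe_t) with ρe_t = Σ_i ρ_i u_i(T) + ½ρ|v|², and the entropy variables vector v(y) = ((g₁ − ½|v|²)/T, …, (g_{n_s} − ½|v|²)/T, v₁/T, …, v_d/T,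 −1/T). Then v(y)ᵀ y + ρ s = Σ_{i=1}^{n_s} R_{s,i} ρ_i; that is, the entropy potential 𝒰 = v(y)ᵀy − U with U = −ρs equals P/T where P = Σ_i ρ_i R_{s,i} T is the mixture pressure. -/
/-!
Since `gᵢ = uᵢ + R_{s,i} T − T sᵢ`, the species components contribute
`∑ ρᵢ uᵢ / T + ∑ R_{s,i} ρᵢ − ρ s`; the kinetic energy `½|v|²` cancels among the density,
momentum and energy components, and the energy component `−ρe_t / T` cancels `∑ ρᵢ uᵢ / T`.
The remaining `ρ s` is absorbed by the entropy term.
-/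

open Finset

/-- Nonnegativity of the weights handles zero total mass, where the division is junk. -/
theorem Finset.sum_mul_sum_div_sum_mul {ι 𝕜 : Type*} [Field 𝕜] [LinearOrder 𝕜]
    [IsStrictOrderedRing 𝕜] (s : Finset ι) (w f : ι → 𝕜) (hw : ∀ i ∈ s, 0 ≤ w i) :
    (∑ j ∈ s, w j) * ∑ i ∈ s, (w i / ∑ j ∈ s, w j) * f i = ∑ i ∈ s, w i * f i := by
  by_cases hmass : ∑ j ∈ s, w j = 0
  · have hzero : ∀ i ∈ s, w i = 0 := (sum_eq_zero_iff_of_nonneg hw).mp hmass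
    rw [hmass, zero_mul]
    exact (sum_eq_zero fun i hi => by rw [hzero i hi, zero_mul]).symm
  · rw [mul_sum]
    refine sum_congr rfl fun i _ => ?_
    field_simp

theorem entropy_potential_identity_general
    (d ns : ℕ)
    (Rs : Fin ns → ℝ)
    (sfun : Fin ns → ℝ → ℝ → ℝ)
    (ρ : Fin ns → ℝ) (hρ : ∀ i, 0 < ρ i)
    (T : ℝ) (hT : 0 < T)
    (v : Fin d → ℝ)
    (u h g : Fin ns → ℝ)
    (hh : ∀ i, h i = u i + Rs i * T)
    (hg : ∀ i, g i = h i - T * sfun i T (ρ i))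
    (rho s ρet : ℝ)
    (hrho : rho = ∑ i, ρ i)
    (hsmix : s = ∑ i, (ρ i / rho) * sfun i T (ρ i))
    (hρet : ρet = (∑ i, ρ i * u i) + (1 / 2) * rho * ∑ k, (v k) ^ 2) :
    (∑ i, ((g i - (1 / 2) * ∑ k, (v k) ^ 2) / T) * ρ i)
      + (∑ k, (v k / T) * (rho * v k))
      + (-(1 / T)) * ρet
      + rho * s
      = ∑ i, Rs i * ρ i := by
  set K := ∑ k, (v k) ^ 2
  have mixture_entropy : rho * s = ∑ i, ρ i * sfun i T (ρ i) := by
    rw [hsmix, hrho]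
    exact sum_mul_sum_div_sum_mul _ _ _ fun i _ => (hρ i).le
  have kinetic : ∑ k, (v k / T) * (rho * v k) = rho / T * K := by
    rw [mul_sum]
    exact sum_congr rfl fun k _ => by ring
  have species : ∑ i, ((g i - (1 / 2) * K) / T) * ρ i
      = ∑ i, (ρ i * u i / T + Rs i * ρ i - ρ i * sfun i T (ρ i) - (1 / 2) * K / T * ρ i) := by
    refine sum_congr rfl fun i _ => ?_
    rw [hg, hh]
    field_simp
  rw [species, kinetic, hρet, mixture_entropy]
  simp only [sum_add_distrib, sum_sub_distrib, ← sum_div, ← mul_sum, ← hrho]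
  field_simp
  ring

/-- Computation of the entropy potential (Section 6.3.1): for the
multicomponent thermally perfect gas Euler system with entropy function
`U = −ρs`, entropy variables
`v = ((g₁ − ½|v|²)/T, …, (g_{n_s} − ½|v|²)/T, v₁/T, …, v_d/T, −1/T)`, the
entropy potential `𝒰 = vᵀy − U = vᵀy + ρs` equals `P/T = Σᵢ R_{s,i} ρᵢ`. -/
theorem entropy_potential_identity
    (d ns np : ℕ) (hd : 1 ≤ d) (hns : 1 ≤ ns)
    (R0 : ℝ) (hR0 : 0 < R0)
    (W : Fin ns → ℝ) (hW : ∀ i, 0 < W i)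
    (Rs : Fin ns → ℝ) (hRs : ∀ i, Rs i = R0 / W i)
    (b : Fin ns → ℕ → ℝ)
    (sfun : Fin ns → ℝ → ℝ → ℝ)
    (ρ : Fin ns → ℝ) (hρ : ∀ i, 0 < ρ i)
    (T : ℝ) (hT : 0 < T)
    (v : Fin d → ℝ)
    (u h g : Fin ns → ℝ)
    (hu : ∀ i, u i = ∑ k ∈ Finset.range (np + 2), b i k * T ^ k)
    (hh : ∀ i, h i = u i + Rs i * T)
    (hg : ∀ i, g i = h i - T * sfun i T (ρ i))
    (rho s ρet : ℝ)
    (hrho : rho = ∑ i, ρ i)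
    (hsmix : s = ∑ i, (ρ i / rho) * sfun i T (ρ i))
    (hρet : ρet = (∑ i, ρ i * u i) + (1 / 2) * rho * ∑ k, (v k) ^ 2) :
    (∑ i, ((g i - (1 / 2) * ∑ k, (v k) ^ 2) / T) * ρ i)
      + (∑ k, (v k / T) * (rho * v k))
      + (-(1 / T)) * ρet
      + rho * s
      = ∑ i, Rs i * ρ i :=
  entropy_potential_identity_general d ns Rs sfun ρ hρ T hT v u h g hh hg rho s ρet hrho hsmix hρet
end
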